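/- arXiv:1611.10325 — 3 statements merged into one kernel-verified Lean document; each statement's English description precedes it below -/
import Mathlib

section
/- Fix 1/2 < σ₀ < 1 and k ≥ 1, and let s₁,…,s_k be complex numbers with σ₀ ≤ Re(s_j). Define F_s(n) = ∑_{n₁,…,n_k ≥ 2, n₁⋯n_k = n} ∏_{ℓ=1}^k Λ(n_ℓ)/(n_ℓ^{s_ℓ} log n_ℓ), where Λ is the von Mangoldt function. Then for every n ≥ 2, |F_s(n)| ≤ (2 log n)^k / n^{σ₀}. -/
open Complex Real ArithmeticFunction Finset

/-!
Each factor is bounded by `2 Λ(m) / m^{σ₀}`, since `log m ≥ log 2 > 1/2` for `m ≥ 2`; because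
`n₁ ⋯ n_k = n`, a whole term is then at most `∏ 2 Λ(n_ℓ) / n^{σ₀}`. Dropping the condition
`n_ℓ ≥ 2` and summing over all `k`-tuples of divisors of `n` gives `(2 ∑_{d ∣ n} Λ(d))^k = (2 log n)^k`.
-/

lemma norm_vonMangoldt_div_cpow_mul_log_le {m : ℕ} (hm : 2 ≤ m) {σ : ℝ} {s : ℂ}
    (hs : σ ≤ s.re) :
    ‖(Λ m : ℂ) / ((m : ℂ) ^ s * (Real.log m : ℂ))‖ ≤ 2 * Λ m / (m : ℝ) ^ σ := by
  have hm_pos : (0 : ℝ) < m := by positivity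
  have hm_one : (1 : ℝ) ≤ m := by exact_mod_cast one_le_two.trans hm
  have hlog : (1 / 2 : ℝ) ≤ Real.log m := by
    have := Real.log_le_log two_pos (by exact_mod_cast hm : (2 : ℝ) ≤ m)
    linarith [Real.log_two_gt_d9]
  have hden : (m : ℝ) ^ σ * (1 / 2) ≤ (m : ℝ) ^ s.re * Real.log m :=
    mul_le_mul (Real.rpow_le_rpow_of_exponent_le hm_one hs) hlog (by norm_num)
      (Real.rpow_nonneg hm_pos.le _)
  have hnorm : ‖(Λ m : ℂ) / ((m : ℂ) ^ s * (Real.log m : ℂ))‖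
      = Λ m / ((m : ℝ) ^ s.re * Real.log m) := by
    rw [norm_div, norm_mul, ← ofReal_natCast, norm_cpow_eq_rpow_re_of_pos hm_pos, norm_real,
      norm_real, Real.norm_of_nonneg vonMangoldt_nonneg,
      Real.norm_of_nonneg (Real.log_nonneg hm_one)]
  calc ‖(Λ m : ℂ) / ((m : ℂ) ^ s * (Real.log m : ℂ))‖
      ≤ Λ m / ((m : ℝ) ^ σ * (1 / 2)) := by
        rw [hnorm]
        exact div_le_div_of_nonneg_left vonMangoldt_nonneg (by positivity) hden
    _ = 2 * Λ m / (m : ℝ) ^ σ := by ring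

lemma norm_prod_vonMangoldt_div_cpow_mul_log_le {ι : Type*} [Fintype ι] {t : ι → ℕ}
    (ht : ∀ l, 2 ≤ t l) {σ : ℝ} {s : ι → ℂ} (hs : ∀ l, σ ≤ (s l).re) :
    ‖∏ l, (Λ (t l) : ℂ) / ((t l : ℂ) ^ (s l) * (Real.log (t l) : ℂ))‖
      ≤ (∏ l, 2 * Λ (t l)) / ((∏ l, t l : ℕ) : ℝ) ^ σ := by
  calc ‖∏ l, (Λ (t l) : ℂ) / ((t l : ℂ) ^ (s l) * (Real.log (t l) : ℂ))‖
      ≤ ∏ l, 2 * Λ (t l) / (t l : ℝ) ^ σ := by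
        rw [norm_prod]
        exact prod_le_prod (fun _ _ ↦ norm_nonneg _)
          fun l _ ↦ norm_vonMangoldt_div_cpow_mul_log_le (ht l) (hs l)
    _ = (∏ l, 2 * Λ (t l)) / ((∏ l, t l : ℕ) : ℝ) ^ σ := by
        rw [prod_div_distrib, Nat.cast_prod, Real.finsetProd_rpow _ _ fun _ _ ↦ by positivity]

lemma sum_piFinset_divisors_prod_two_mul_vonMangoldt (k n : ℕ) :
    ∑ t ∈ Fintype.piFinset (fun _ : Fin k ↦ n.divisors), ∏ l, 2 * Λ (t l)
      = (2 * Real.log n) ^ k := by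
  rw [← sum_pow' _ fun d ↦ 2 * Λ d, ← mul_sum, vonMangoldt_sum]

theorem coefficient_bound_general
    (σ₀ : ℝ)
    (k : ℕ)
    (s : Fin k → ℂ) (hs : ∀ j, σ₀ ≤ (s j).re)
    (n : ℕ) :
    ‖(∑ t ∈ (Fintype.piFinset fun _ : Fin k => Finset.range (n + 1)) |>.filter
          (fun t => (∀ l, 2 ≤ t l) ∧ ∏ l, t l = n),
        ∏ l, (Λ (t l) : ℂ) / ((t l : ℂ) ^ (s l) * (Real.log (t l) : ℂ)))‖
      ≤ (2 * Real.log n) ^ k / (n : ℝ) ^ σ₀ := by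
  set S := (Fintype.piFinset fun _ : Fin k => Finset.range (n + 1)).filter
    (fun t => (∀ l, 2 ≤ t l) ∧ ∏ l, t l = n)
  have hS : S ⊆ Fintype.piFinset fun _ : Fin k ↦ n.divisors := by
    intro t ht
    obtain ⟨-, ht2, rfl⟩ := mem_filter.mp ht
    refine Fintype.mem_piFinset.mpr fun l ↦ Nat.mem_divisors.mpr
      ⟨dvd_prod_of_mem _ (mem_univ l), prod_ne_zero_iff.mpr fun i _ ↦ ?_⟩
    exact (lt_of_lt_of_le two_pos (ht2 i)).ne'
  calc _ ≤ ∑ t ∈ S, (∏ l, 2 * Λ (t l)) / (n : ℝ) ^ σ₀ := by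
        refine norm_sum_le_of_le S fun t ht ↦ ?_
        obtain ⟨-, ht2, htn⟩ := mem_filter.mp ht
        simpa only [htn] using norm_prod_vonMangoldt_div_cpow_mul_log_le ht2 hs
    _ ≤ ∑ t ∈ Fintype.piFinset (fun _ : Fin k ↦ n.divisors), (∏ l, 2 * Λ (t l)) / (n : ℝ) ^ σ₀ :=
        sum_le_sum_of_subset_of_nonneg hS fun _ _ _ ↦
          div_nonneg (prod_nonneg fun _ _ ↦ mul_nonneg zero_le_two vonMangoldt_nonneg)
            (Real.rpow_nonneg n.cast_nonneg _)
    _ = (2 * Real.log n) ^ k / (n : ℝ) ^ σ₀ := by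
        rw [← sum_div, sum_piFinset_divisors_prod_two_mul_vonMangoldt]

/-- bound on the Dirichlet coefficients
`F_s(n) = ∑_{n₁⋯n_k = n, nᵢ ≥ 2} ∏_ℓ Λ(n_ℓ)/(n_ℓ^{s_ℓ} log n_ℓ)`:
for `n ≥ 2` and `σ₀ ≤ Re(s_j)` one has `|F_s(n)| ≤ (2 log n)^k / n^{σ₀}`. -/
theorem coefficient_bound
    (σ₀ : ℝ) (hσ₀ : 1 / 2 < σ₀) (hσ₀' : σ₀ < 1)
    (k : ℕ) (hk : 1 ≤ k)
    (s : Fin k → ℂ) (hs : ∀ j, σ₀ ≤ (s j).re)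
    (n : ℕ) (hn : 2 ≤ n) :
    ‖(∑ t ∈ (Fintype.piFinset fun _ : Fin k => Finset.range (n + 1)) |>.filter
          (fun t => (∀ l, 2 ≤ t l) ∧ ∏ l, t l = n),
        ∏ l, (Λ (t l) : ℂ) / ((t l : ℂ) ^ (s l) * (Real.log (t l) : ℂ)))‖
      ≤ (2 * Real.log n) ^ k / (n : ℝ) ^ σ₀ :=
  coefficient_bound_general σ₀ k s hs n
end

section
/- For y > 0 define G(y) = 2y² ∑_{m=0}^∞ 1/(y+m)² − 2y − 1. Then 0 ≤ G(y) ≤ 1 for all y > 0. -/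
open Real Filter Topology

/-- Telescoping sum for an antitone sequence tending to zero. -/
lemma hasSum_telescope_of_tendsto {F : ℕ → ℝ} (hmono : ∀ n, F (n + 1) ≤ F n)
    (hlim : Tendsto F atTop (𝓝 0)) : HasSum (fun n => F n - F (n + 1)) (F 0) := by
  rw [hasSum_iff_tendsto_nat_of_nonneg (fun n => sub_nonneg.2 (hmono n))]
  have : ∀ n : ℕ, ∑ i ∈ Finset.range n, (F i - F (i + 1)) = F 0 - F n := fun n =>
    Finset.sum_range_sub' F n
  simp only [this]
  simpa using tendsto_const_nhds.sub hlim

lemma tendsto_aux (y : ℝ) : Tendsto (fun m : ℕ => 1 / (y + m)) atTop (𝓝 0) := by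
  have h : Tendsto (fun m : ℕ => (y + m : ℝ)) atTop atTop :=
    tendsto_atTop_add_const_left _ y tendsto_natCast_atTop_atTop
  exact h.inv_tendsto_atTop.congr fun m => by simp [one_div]

/-- Vaaler's function `G(y) = 2y² ∑_{m≥0} (y+m)^{-2} - 2y - 1`. -/
noncomputable def vaalerG (y : ℝ) : ℝ :=
  2 * y ^ 2 * (∑' m : ℕ, 1 / (y + m) ^ 2) - 2 * y - 1

/-- for all `y > 0`, `0 ≤ G(y) ≤ 1`. -/
theorem vaalerG_bounds (y : ℝ) (hy : 0 < y) : 0 ≤ vaalerG y ∧ vaalerG y ≤ 1 := by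
  have hpos : ∀ m : ℕ, (0 : ℝ) < y + m := fun m => by positivity
  set f : ℕ → ℝ := fun m => 1 / (y + m) ^ 2 with hf
  -- lower telescoping function
  set g : ℕ → ℝ := fun m => 1 / (y + m) + 1 / (2 * (y + m) ^ 2) with hg
  -- upper telescoping function
  set h : ℕ → ℝ := fun m => 1 / (y + m) + 1 / (y + m) ^ 2 with hh
  have hcast : ∀ m : ℕ, ((m + 1 : ℕ) : ℝ) = (m : ℝ) + 1 := fun m => by push_cast; ring
  have hgmono : ∀ m, g (m + 1) ≤ g m := by
    intro m
    have h1 := hpos m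
    have h2 : (0:ℝ) < y + m + 1 := by linarith
    simp only [hg, hcast]
    have : y + ((m : ℝ) + 1) = y + m + 1 := by ring
    rw [this]
    have e1 : 1 / (y + m + 1) ≤ 1 / (y + m) := by
      apply one_div_le_one_div_of_le h1; linarith
    have e2 : 1 / (2 * (y + m + 1) ^ 2) ≤ 1 / (2 * (y + m) ^ 2) := by
      apply one_div_le_one_div_of_le (by positivity); nlinarith
    linarith
  have hhmono : ∀ m, h (m + 1) ≤ h m := by
    intro m
    have h1 := hpos m
    have h2 : (0:ℝ) < y + m + 1 := by linarith
    simp only [hh, hcast]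
    have : y + ((m : ℝ) + 1) = y + m + 1 := by ring
    rw [this]
    have e1 : 1 / (y + m + 1) ≤ 1 / (y + m) := by
      apply one_div_le_one_div_of_le h1; linarith
    have e2 : 1 / ((y + m + 1) ^ 2) ≤ 1 / ((y + m) ^ 2) := by
      apply one_div_le_one_div_of_le (by positivity); nlinarith
    linarith
  have hne : ∀ m : ℕ, (y + (m : ℝ)) ≠ 0 := fun m => (hpos m).ne'
  have t1 := tendsto_aux y
  have t2' : Tendsto (fun m : ℕ => 1 / ((y + (m : ℝ)) ^ 2)) atTop (𝓝 0) := by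
    have h2 := t1.mul t1
    rw [mul_zero] at h2
    exact h2.congr fun m => by rw [div_mul_div_comm, one_mul, ← pow_two]
  have t2 : Tendsto (fun m : ℕ => 1 / (2 * (y + (m : ℝ)) ^ 2)) atTop (𝓝 0) := by
    have h2 := t2'.const_mul (2⁻¹ : ℝ)
    rw [mul_zero] at h2
    exact h2.congr fun m => by rw [← one_div, div_mul_div_comm, one_mul]
  have hglim : Tendsto g atTop (𝓝 0) := by
    have h2 := t1.add t2
    rw [add_zero] at h2
    exact h2
  have hhlim : Tendsto h atTop (𝓝 0) := by
    have h2 := t1.add t2'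
    rw [add_zero] at h2
    exact h2
  have hgsum : HasSum (fun m => g m - g (m + 1)) (g 0) :=
    hasSum_telescope_of_tendsto hgmono hglim
  have hhsum : HasSum (fun m => h m - h (m + 1)) (h 0) :=
    hasSum_telescope_of_tendsto hhmono hhlim
  -- termwise inequalities
  have hlow : ∀ m, g m - g (m + 1) ≤ f m := by
    intro m
    have h1 := hpos m
    have h2 : (0:ℝ) < y + m + 1 := by linarith
    simp only [hf, hg, hcast]
    have : y + ((m : ℝ) + 1) = y + m + 1 := by ring
    rw [this]
    rw [div_add_div _ _ (by positivity) (by positivity), div_add_div _ _ (by positivity) (by positivity),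
      div_sub_div _ _ (by positivity) (by positivity), div_le_div_iff₀ (by positivity) (by positivity)]
    nlinarith [sq_nonneg (y + m), sq_nonneg (y + m + 1), mul_pos h1 h2, sq_nonneg ((y+m)*(y+m+1))]
  have hupp : ∀ m, f m ≤ h m - h (m + 1) := by
    intro m
    have h1 := hpos m
    have h2 : (0:ℝ) < y + m + 1 := by linarith
    simp only [hf, hh, hcast]
    have : y + ((m : ℝ) + 1) = y + m + 1 := by ring
    rw [this]
    rw [div_add_div _ _ (by positivity) (by positivity), div_add_div _ _ (by positivity) (by positivity),
      div_sub_div _ _ (by positivity) (by positivity), div_le_div_iff₀ (by positivity) (by positivity)]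
    nlinarith [mul_pos h1 h2, mul_pos (mul_pos h1 h1) h2, mul_pos (mul_pos h1 h2) h2]
  have hfnonneg : ∀ m, 0 ≤ f m := fun m => by positivity
  have hfsummable : Summable f :=
    Summable.of_nonneg_of_le hfnonneg hupp hhsum.summable
  have hS_ge : g 0 ≤ ∑' m, f m := by
    rw [← hgsum.tsum_eq]
    exact Summable.tsum_le_tsum hlow hgsum.summable hfsummable
  have hS_le : ∑' m, f m ≤ h 0 := by
    rw [← hhsum.tsum_eq]
    exact Summable.tsum_le_tsum hupp hfsummable hhsum.summable
  have hg0 : g 0 = 1 / y + 1 / (2 * y ^ 2) := by simp [hg]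
  have hh0 : h 0 = 1 / y + 1 / y ^ 2 := by simp [hh]
  rw [hg0] at hS_ge
  rw [hh0] at hS_le
  have hy2 : (0:ℝ) < y ^ 2 := by positivity
  constructor
  · unfold vaalerG
    have : 2 * y ^ 2 * (1 / y + 1 / (2 * y ^ 2)) ≤ 2 * y ^ 2 * ∑' m : ℕ, 1 / (y + m) ^ 2 := by
      apply mul_le_mul_of_nonneg_left hS_ge (by positivity)
    have e : 2 * y ^ 2 * (1 / y + 1 / (2 * y ^ 2)) = 2 * y + 1 := by field_simp
    linarith [e ▸ this]
  · unfold vaalerG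
    have : 2 * y ^ 2 * (∑' m : ℕ, 1 / (y + m) ^ 2) ≤ 2 * y ^ 2 * (1 / y + 1 / y ^ 2) := by
      apply mul_le_mul_of_nonneg_left hS_le (by positivity)
    have e : 2 * y ^ 2 * (1 / y + 1 / y ^ 2) = 2 * y + 2 := by field_simp
    linarith [e ▸ this]
end

section
/- For y > 0 define G(y) = 2y² ∑_{m=0}^∞ 1/(y+m)² − 2y − 1. Then G is non-increasing on (0, 1]: for 0 < y ≤ 1, G'(y) = 4y ∑_{m ≥ 1} m/(y+m)³ − 2 ≤ 0. -/
/-!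
Differentiating the series term by term gives `G'(y) = 4y ∑_{m ≥ 1} m/(y+m)³ - 2`, using
`1/(y+m)² - y/(y+m)³ = m/(y+m)³`. The sum is compared with `∫_0^∞ t/(y+t)³ dt = 1/(2y)`: the
primitive `P(t) = y/(2(y+t)²) - 1/(y+t)` of `t/(y+t)³` satisfies `m/(y+m)³ ≤ P(m) - P(m-1)` for
`m ≥ 1` when `y ≤ 1`, and the sum telescopes to at most `-P(0) = 1/(2y)`.
-/

open Real Set

theorem summable_one_div_add_natCast_pow (c : ℝ) {p : ℕ} (hp : 2 ≤ p) :
    Summable fun n : ℕ => 1 / (c + n) ^ p := by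
  refine Summable.of_norm ?_
  simpa [add_comm, abs_pow] using
    (Real.summable_one_div_nat_add_rpow c p).2 (by exact_mod_cast hp)

theorem hasDerivAt_one_div_add_sq {a z : ℝ} (h : z + a ≠ 0) :
    HasDerivAt (fun w => 1 / (w + a) ^ 2) (-2 * (1 / (z + a) ^ 3)) z := by
  simp only [one_div]
  refine ((((hasDerivAt_id' z).add_const a).fun_pow 2).fun_inv (pow_ne_zero 2 h)).congr_deriv ?_
  field_simp
  ring

theorem hasDerivAt_tsum_one_div_add_sq {y : ℝ} (hy : 0 < y) :
    HasDerivAt (fun z : ℝ => ∑' n : ℕ, 1 / (z + n) ^ 2)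
      (-2 * ∑' n : ℕ, 1 / (y + n) ^ 3) y := by
  have hpos : ∀ z ∈ Ioi (y / 2), ∀ n : ℕ, 0 < z + n := fun z hz n => by
    have : 0 < z := lt_trans (by positivity) hz
    positivity
  have hy2 : y ∈ Ioi (y / 2) := by simpa using hy
  rw [← tsum_mul_left]
  refine hasDerivAt_tsum_of_isPreconnected (u := fun n : ℕ => 2 * (1 / (y / 2 + n) ^ 3))
    ((summable_one_div_add_natCast_pow _ (by norm_num)).mul_left 2) isOpen_Ioi isPreconnected_Ioi
    (fun n z hz => hasDerivAt_one_div_add_sq (hpos z hz n).ne') (fun n z hz => ?_)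
    hy2 (summable_one_div_add_natCast_pow y (by norm_num)) hy2
  have hzn := hpos z hz n
  have hle : y / 2 + n ≤ z + n := by linarith [mem_Ioi.1 hz]
  rw [norm_mul, norm_neg, Real.norm_two, Real.norm_of_nonneg (by positivity)]
  gcongr

theorem one_div_sq_sub_mul_one_div_cube (y t : ℝ) :
    1 / (y + t) ^ 2 - y * (1 / (y + t) ^ 3) = t / (y + t) ^ 3 := by
  rcases eq_or_ne (y + t) 0 with h | h
  · simp [h]
  · field_simp
    ring

theorem tsum_one_div_sq_sub_mul_tsum_one_div_cube (y : ℝ) :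
    (∑' m : ℕ, 1 / (y + m) ^ 2) - y * ∑' m : ℕ, 1 / (y + m) ^ 3
      = ∑' m : ℕ, ((m : ℝ) + 1) / (y + ((m : ℝ) + 1)) ^ 3 := by
  have hsq := summable_one_div_add_natCast_pow y (p := 2) (by norm_num)
  have hcube := (summable_one_div_add_natCast_pow y (p := 3) (by norm_num)).mul_left y
  have hdiff : ∀ m : ℕ, 1 / (y + m) ^ 2 - y * (1 / (y + m) ^ 3) = m / (y + m) ^ 3 :=
    fun m => one_div_sq_sub_mul_one_div_cube y m
  rw [← tsum_mul_left, ← hsq.tsum_sub hcube, tsum_congr hdiff,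
    ((hsq.sub hcube).congr hdiff).tsum_eq_zero_add]
  simp

theorem hasDerivAt_vaalerG {y : ℝ} (hy : 0 < y) :
    HasDerivAt vaalerG
      (4 * y * (∑' m : ℕ, ((m : ℝ) + 1) / (y + ((m : ℝ) + 1)) ^ 3) - 2) y := by
  have h := ((((hasDerivAt_pow 2 y).const_mul 2).mul (hasDerivAt_tsum_one_div_add_sq hy)).sub
    ((hasDerivAt_id y).const_mul 2)).sub_const 1
  refine h.congr_deriv ?_
  rw [← tsum_one_div_sq_sub_mul_tsum_one_div_cube]
  push_cast
  ring

noncomputable def vaalerPrimitive (y t : ℝ) : ℝ := y / (2 * (y + t) ^ 2) - 1 / (y + t)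

theorem vaalerPrimitive_zero {y : ℝ} (hy : 0 < y) : vaalerPrimitive y 0 = -(1 / (2 * y)) := by
  unfold vaalerPrimitive
  field_simp
  ring

theorem vaalerPrimitive_nonpos {y t : ℝ} (hy : 0 < y) (ht : 0 ≤ t) :
    vaalerPrimitive y t ≤ 0 := by
  have h : 0 < y + t := by positivity
  rw [vaalerPrimitive, sub_nonpos, div_le_div_iff₀ (by positivity) h]
  nlinarith

theorem div_cube_le_vaalerPrimitive_sub {y t : ℝ} (hy : 0 < y) (hy1 : y ≤ 1) (ht : 0 ≤ t) :
    (t + 1) / (y + (t + 1)) ^ 3 ≤ vaalerPrimitive y (t + 1) - vaalerPrimitive y t := by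
  set a := y + t with ha
  have ha0 : 0 < a := by positivity
  have hdiff : vaalerPrimitive y (t + 1) - vaalerPrimitive y t - (t + 1) / (y + (t + 1)) ^ 3
      = (t + a * (1 - y) + 2 * a * t) / (2 * a ^ 2 * (a + 1) ^ 3) := by
    rw [vaalerPrimitive, vaalerPrimitive, ← add_assoc, ← ha, show t = a - y by linarith]
    field_simp
    ring
  have hnum : 0 ≤ t + a * (1 - y) + 2 * a * t := by
    have := mul_nonneg ha0.le (sub_nonneg.2 hy1)
    positivity
  rw [← sub_nonneg, hdiff]
  exact div_nonneg hnum (by positivity)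

theorem tsum_succ_div_cube_le {y : ℝ} (hy : 0 < y) (hy1 : y ≤ 1) :
    ∑' m : ℕ, ((m : ℝ) + 1) / (y + ((m : ℝ) + 1)) ^ 3 ≤ 1 / (2 * y) := by
  refine Real.tsum_le_of_sum_range_le (fun n => by positivity) fun n => ?_
  calc ∑ i ∈ Finset.range n, ((i : ℝ) + 1) / (y + ((i : ℝ) + 1)) ^ 3
      ≤ ∑ i ∈ Finset.range n, (vaalerPrimitive y ↑(i + 1) - vaalerPrimitive y i) :=
        Finset.sum_le_sum fun i _ => by
          push_cast
          exact div_cube_le_vaalerPrimitive_sub hy hy1 i.cast_nonneg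
    _ = vaalerPrimitive y n + 1 / (2 * y) := by
        rw [Finset.sum_range_sub (fun i : ℕ => vaalerPrimitive y i), Nat.cast_zero,
          vaalerPrimitive_zero hy, sub_neg_eq_add]
    _ ≤ 1 / (2 * y) := by linarith [vaalerPrimitive_nonpos hy n.cast_nonneg]

theorem vaalerG_deriv_nonpos {y : ℝ} (hy : 0 < y) (hy1 : y ≤ 1) :
    4 * y * (∑' m : ℕ, ((m : ℝ) + 1) / (y + ((m : ℝ) + 1)) ^ 3) - 2 ≤ 0 := by
  have h := mul_le_mul_of_nonneg_left (tsum_succ_div_cube_le hy hy1) (by positivity : 0 ≤ 4 * y)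
  have h2 : 4 * y * (1 / (2 * y)) = 2 := by field_simp; ring
  linarith

/-- `G` is non-increasing on `(0,1]`; indeed for `0 < y ≤ 1`,
`G'(y) = 4y ∑_{m ≥ 1} m/(y+m)³ - 2 ≤ 0`. -/
theorem vaalerG_antitone :
    AntitoneOn vaalerG (Set.Ioc (0:ℝ) 1) ∧
    ∀ y ∈ Set.Ioc (0:ℝ) 1,
      HasDerivAt vaalerG
        (4 * y * (∑' m : ℕ, ((m : ℝ) + 1) / (y + ((m : ℝ) + 1)) ^ 3) - 2) y ∧
      4 * y * (∑' m : ℕ, ((m : ℝ) + 1) / (y + ((m : ℝ) + 1)) ^ 3) - 2 ≤ 0 := by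
  refine ⟨antitoneOn_of_hasDerivWithinAt_nonpos (convex_Ioc 0 1)
    (f' := fun y => 4 * y * (∑' m : ℕ, ((m : ℝ) + 1) / (y + ((m : ℝ) + 1)) ^ 3) - 2)
    ?_ ?_ ?_,
    fun y hy => ⟨hasDerivAt_vaalerG hy.1, vaalerG_deriv_nonpos hy.1 hy.2⟩⟩
  · exact fun y hy => (hasDerivAt_vaalerG hy.1).continuousAt.continuousWithinAt
  · rw [interior_Ioc]
    exact fun y hy => (hasDerivAt_vaalerG hy.1).hasDerivWithinAt
  · rw [interior_Ioc]
    exact fun y hy => vaalerG_deriv_nonpos hy.1 hy.2.le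
end
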